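/- Let σ, β ∈ ℝ not both zero, σ ≥ 0, and suppose M(s) - μ* = (1,s)ᵀX(1,s) + p(‖s‖)² + ‖s‖q(‖s‖)² for all s ∈ ℝⁿ with X ⪰ 0, deg p ≤ 2, deg q ≤ 1, μ* the minimum value of M. If ŝ and s* are two global minimizers of M, then ‖ŝ‖ · ‖s*‖ · (‖ŝ‖ - ‖s*‖) = 0; that is, all nonzero global minimizers have the same Euclidean norm. -/

import Mathlib

open Matrix Polynomial

noncomputable def enormFin {n : ℕ} (s : Fin n → ℝ) : ℝ := Real.sqrt (s ⬝ᵥ s)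

noncomputable def Mfun {n : ℕ} (f0 : ℝ) (g : Fin n → ℝ)
    (H : Matrix (Fin n) (Fin n) ℝ) (β σ : ℝ) (s : Fin n → ℝ) : ℝ :=
  f0 + g ⬝ᵥ s + (1/2) * (s ⬝ᵥ (H *ᵥ s)) + (β/6) * enormFin s ^ 3 + (σ/4) * enormFin s ^ 4

noncomputable def Bmat {n : ℕ} (H : Matrix (Fin n) (Fin n) ℝ) (β σ : ℝ)
    (s : Fin n → ℝ) : Matrix (Fin n) (Fin n) ℝ :=
  H + ((β/2) * enormFin s) • (1 : Matrix (Fin n) (Fin n) ℝ)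
    + (σ * enormFin s ^ 2) • (1 : Matrix (Fin n) (Fin n) ℝ)
/-! At a nonzero minimizer `s` all three nonnegative terms of the certificate vanish, so `p` and
`q` vanish at `‖s‖`. If two minimizers had distinct nonzero norms `r₁ ≠ r₂`, then `q = 0` and
`p = a (X - r₁) (X - r₂)`. Along the line `t ↦ t • s` the certificate becomes an identity between
a quadratic polynomial in `t` and a quartic polynomial in `|t|`, which forces `σ = 4a²`,
`β = 12ab` and `bc = 0`. As `σ` and `β` are not both zero, `a ≠ 0`; but then
`bc = -a² r₁ r₂ (r₁ + r₂) ≠ 0`. -/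

lemma enormFin_nonneg {n : ℕ} (s : Fin n → ℝ) : 0 ≤ enormFin s := Real.sqrt_nonneg _

lemma enormFin_smul {n : ℕ} (t : ℝ) (s : Fin n → ℝ) : enormFin (t • s) = |t| * enormFin s := by
  rw [enormFin, enormFin, dotProduct_smul, smul_dotProduct, smul_eq_mul, smul_eq_mul, ← mul_assoc,
    Real.sqrt_mul (mul_self_nonneg t), Real.sqrt_mul_self_eq_abs]

lemma Mfun_smul {n : ℕ} (f0 : ℝ) (g : Fin n → ℝ) (H : Matrix (Fin n) (Fin n) ℝ) (β σ t : ℝ)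
    (s : Fin n → ℝ) :
    Mfun f0 g H β σ (t • s) = f0 + (g ⬝ᵥ s) * t + (1/2) * (s ⬝ᵥ H *ᵥ s) * t ^ 2
      + (β/6) * (|t| * enormFin s) ^ 3 + (σ/4) * (|t| * enormFin s) ^ 4 := by
  simp only [Mfun, enormFin_smul, mulVec_smul, dotProduct_smul, smul_dotProduct, smul_eq_mul]
  ring

lemma Fin.cons_smul_eq_cons_add_smul {R : Type*} [Semiring R] {n : ℕ} (a t : R) (s : Fin n → R) :
    (Fin.cons a (t • s) : Fin (n + 1) → R) = Fin.cons a 0 + t • Fin.cons 0 s := by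
  ext i; cases i using Fin.cases <;> simp

lemma Matrix.dotProduct_mulVec_add_smul {ι R : Type*} [Fintype ι] [CommRing R]
    (A : Matrix ι ι R) (v w : ι → R) (t : R) :
    (v + t • w) ⬝ᵥ A *ᵥ (v + t • w)
      = v ⬝ᵥ A *ᵥ v + (v ⬝ᵥ A *ᵥ w + w ⬝ᵥ A *ᵥ v) * t + (w ⬝ᵥ A *ᵥ w) * t ^ 2 := by
  simp only [mulVec_add, mulVec_smul, dotProduct_add, add_dotProduct, dotProduct_smul,
    smul_dotProduct, smul_eq_mul]
  ring

lemma Polynomial.eval_of_degree_le_one {R : Type*} [CommRing R] {p : R[X]} (hp : p.degree ≤ 1)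
    (x : R) : p.eval x = p.coeff 0 + p.coeff 1 * x := by
  conv_lhs => rw [eq_X_add_C_of_degree_le_one hp]
  simp only [eval_add, eval_mul, eval_C, eval_X]
  ring

lemma Polynomial.eval_of_degree_le_two {R : Type*} [CommRing R] {p : R[X]} (hp : p.degree ≤ 2)
    (x : R) : p.eval x = p.coeff 0 + p.coeff 1 * x + p.coeff 2 * x ^ 2 := by
  conv_lhs => rw [eq_quadratic_of_degree_le_two hp]
  simp only [eval_add, eval_mul, eval_pow, eval_C, eval_X]
  ring

lemma Polynomial.coeff_eq_of_degree_le_two_of_roots {K : Type*} [Field K] {p : K[X]}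
    (hp : p.degree ≤ 2) {x₁ x₂ : K} (hx : x₁ ≠ x₂) (h₁ : p.eval x₁ = 0) (h₂ : p.eval x₂ = 0) :
    p.coeff 1 = -p.coeff 2 * (x₁ + x₂) ∧ p.coeff 0 = p.coeff 2 * x₁ * x₂ := by
  rw [eval_of_degree_le_two hp] at h₁ h₂
  have hb : p.coeff 1 = -p.coeff 2 * (x₁ + x₂) := by
    have h : (x₁ - x₂) * (p.coeff 1 + p.coeff 2 * (x₁ + x₂)) = 0 := by
      linear_combination h₁ - h₂
    linear_combination (mul_eq_zero.mp h).resolve_left (sub_ne_zero.mpr hx)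
  exact ⟨hb, by linear_combination h₁ - x₁ * hb⟩

lemma coeffs_eq_zero_of_quadratic_eq_quartic_abs {c₀ c₁ c₂ f₀ f₁ f₂ f₃ f₄ : ℝ}
    (h : ∀ t : ℝ, c₀ + c₁ * t + c₂ * t ^ 2
      = f₀ + f₁ * |t| + f₂ * |t| ^ 2 + f₃ * |t| ^ 3 + f₄ * |t| ^ 4) :
    f₁ = 0 ∧ f₃ = 0 ∧ f₄ = 0 := by
  have h₀ := h 0
  have h₁ := h 1
  have h₂ := h 2
  have h₃ := h 3
  have h₄ := h 4
  have h₅ := h (-1)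
  norm_num at h₀ h₁ h₂ h₃ h₄ h₅
  exact ⟨by linarith, by linarith, by linarith⟩

def IsSOSRepresentation {n : ℕ} (f0 : ℝ) (g : Fin n → ℝ) (H : Matrix (Fin n) (Fin n) ℝ)
    (β σ μ : ℝ) (X : Matrix (Fin (n + 1)) (Fin (n + 1)) ℝ) (p q : Polynomial ℝ) : Prop :=
  ∀ s : Fin n → ℝ, Mfun f0 g H β σ s - μ =
    (Fin.cons 1 s) ⬝ᵥ (X *ᵥ (Fin.cons 1 s)) + (p.eval (enormFin s)) ^ 2
      + enormFin s * (q.eval (enormFin s)) ^ 2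

namespace IsSOSRepresentation

variable {n : ℕ} {f0 : ℝ} {g : Fin n → ℝ} {H : Matrix (Fin n) (Fin n) ℝ} {β σ μ : ℝ}
  {X : Matrix (Fin (n + 1)) (Fin (n + 1)) ℝ} {p q : Polynomial ℝ}

lemma eval_eq_zero (hrep : IsSOSRepresentation f0 g H β σ μ X p q) (hX : X.PosSemidef)
    {s : Fin n → ℝ} (hs : Mfun f0 g H β σ s = μ) (hs₀ : enormFin s ≠ 0) :
    p.eval (enormFin s) = 0 ∧ q.eval (enormFin s) = 0 := by
  have h := hrep s
  rw [hs, sub_self] at h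
  have hQ : 0 ≤ (Fin.cons 1 s : Fin (n + 1) → ℝ) ⬝ᵥ X *ᵥ Fin.cons 1 s :=
    hX.dotProduct_mulVec_nonneg _
  have hp : 0 ≤ p.eval (enormFin s) ^ 2 := sq_nonneg _
  have hq : 0 ≤ enormFin s * q.eval (enormFin s) ^ 2 :=
    mul_nonneg (enormFin_nonneg s) (sq_nonneg _)
  have hp₀ : p.eval (enormFin s) ^ 2 = 0 := by linarith
  have hq₀ : enormFin s * q.eval (enormFin s) ^ 2 = 0 := by linarith
  exact ⟨pow_eq_zero_iff two_ne_zero |>.mp hp₀, by simpa [hs₀] using hq₀⟩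

lemma coeff_relations (hrep : IsSOSRepresentation f0 g H β σ μ X p q) (hp : p.degree ≤ 2)
    (hq : q.degree ≤ 1) {s : Fin n → ℝ} (hs : enormFin s ≠ 0) :
    σ = 4 * p.coeff 2 ^ 2 ∧ β = 6 * (2 * p.coeff 2 * p.coeff 1 + q.coeff 1 ^ 2) ∧
      2 * p.coeff 1 * p.coeff 0 + q.coeff 0 ^ 2 = 0 := by
  set r := enormFin s
  set v : Fin (n + 1) → ℝ := Fin.cons 1 0
  set w : Fin (n + 1) → ℝ := Fin.cons 0 s
  -- `fᵢ` are the coefficients of `p(ρ)² + ρ q(ρ)² - β/6 ρ³ - σ/4 ρ⁴` at `ρ = r |t|`.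
  obtain ⟨h₁, h₃, h₄⟩ := coeffs_eq_zero_of_quadratic_eq_quartic_abs
    (c₀ := f0 - μ - v ⬝ᵥ X *ᵥ v) (c₁ := g ⬝ᵥ s - (v ⬝ᵥ X *ᵥ w + w ⬝ᵥ X *ᵥ v))
    (c₂ := (1/2) * (s ⬝ᵥ H *ᵥ s) - w ⬝ᵥ X *ᵥ w) (f₀ := p.coeff 0 ^ 2)
    (f₁ := (2 * p.coeff 1 * p.coeff 0 + q.coeff 0 ^ 2) * r)
    (f₂ := (p.coeff 1 ^ 2 + 2 * p.coeff 2 * p.coeff 0 + 2 * q.coeff 1 * q.coeff 0) * r ^ 2)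
    (f₃ := (2 * p.coeff 2 * p.coeff 1 + q.coeff 1 ^ 2 - β / 6) * r ^ 3)
    (f₄ := (p.coeff 2 ^ 2 - σ / 4) * r ^ 4) fun t => by
      have h := hrep (t • s)
      rw [Mfun_smul, Fin.cons_smul_eq_cons_add_smul, dotProduct_mulVec_add_smul, enormFin_smul,
        eval_of_degree_le_two hp, eval_of_degree_le_one hq] at h
      linear_combination h
  refine ⟨?_, ?_, (mul_eq_zero.mp h₁).resolve_right hs⟩
  · linear_combination -4 * (mul_eq_zero.mp h₄).resolve_right (pow_ne_zero 4 hs)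
  · linear_combination -6 * (mul_eq_zero.mp h₃).resolve_right (pow_ne_zero 3 hs)

end IsSOSRepresentation

theorem stmt15_general {n : ℕ} (f0 : ℝ) (g : Fin n → ℝ) (H : Matrix (Fin n) (Fin n) ℝ)
    (β σ : ℝ) (hne : ¬ (σ = 0 ∧ β = 0))
    (μstar : ℝ)
    (hrep : ∃ (X : Matrix (Fin (n+1)) (Fin (n+1)) ℝ) (p q : Polynomial ℝ),
      X.PosSemidef ∧ p.degree ≤ 2 ∧ q.degree ≤ 1 ∧
      ∀ s : Fin n → ℝ,
        Mfun f0 g H β σ s - μstar =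
          (Fin.cons 1 s) ⬝ᵥ (X *ᵥ (Fin.cons 1 s))
            + (p.eval (enormFin s))^2 + enormFin s * (q.eval (enormFin s))^2)
    (shat sstar : Fin n → ℝ)
    (h1 : Mfun f0 g H β σ shat = μstar)
    (h2 : Mfun f0 g H β σ sstar = μstar) :
    enormFin shat * enormFin sstar * (enormFin shat - enormFin sstar) = 0 := by
  obtain ⟨X, p, q, hX, hp, hq, hrep⟩ := hrep
  have hrep : IsSOSRepresentation f0 g H β σ μstar X p q := hrep
  by_contra hne₀
  have hr₁ : enormFin shat ≠ 0 := fun h => hne₀ (by simp [h])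
  have hr₂ : enormFin sstar ≠ 0 := fun h => hne₀ (by simp [h])
  have hr : enormFin shat ≠ enormFin sstar := fun h => hne₀ (by simp [h])
  obtain ⟨hp₁, hq₁⟩ := hrep.eval_eq_zero hX h1 hr₁
  obtain ⟨hp₂, hq₂⟩ := hrep.eval_eq_zero hX h2 hr₂
  obtain ⟨hσ, hβ, hbc⟩ := hrep.coeff_relations hp hq hr₁
  obtain ⟨hb, hc⟩ := coeff_eq_of_degree_le_two_of_roots hp hr hp₁ hp₂
  obtain ⟨hd, he⟩ := coeff_eq_of_degree_le_two_of_roots (hq.trans (by norm_num)) hr hq₁ hq₂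
  have hq_lead : q.coeff 2 = 0 := coeff_eq_zero_of_degree_lt (hq.trans_lt (by norm_num))
  have ha : p.coeff 2 ≠ 0 := fun ha => hne ⟨by simp [hσ, ha], by simp [hβ, ha, hd, hq_lead]⟩
  have hpos :
      0 < p.coeff 2 ^ 2 * enormFin shat * enormFin sstar * (enormFin shat + enormFin sstar) := by
    have := (enormFin_nonneg shat).lt_of_ne' hr₁
    have := (enormFin_nonneg sstar).lt_of_ne' hr₂
    positivity
  rw [hb, hc, he, hq_lead] at hbc
  linarith

theorem stmt15 {n : ℕ} (f0 : ℝ) (g : Fin n → ℝ) (H : Matrix (Fin n) (Fin n) ℝ)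
    (hH : H.IsSymm) (β σ : ℝ) (hσ : 0 ≤ σ) (hne : ¬ (σ = 0 ∧ β = 0))
    (μstar : ℝ) (hmin : ∀ s : Fin n → ℝ, μstar ≤ Mfun f0 g H β σ s)
    (hrep : ∃ (X : Matrix (Fin (n+1)) (Fin (n+1)) ℝ) (p q : Polynomial ℝ),
      X.PosSemidef ∧ p.degree ≤ 2 ∧ q.degree ≤ 1 ∧
      ∀ s : Fin n → ℝ,
        Mfun f0 g H β σ s - μstar =
          (Fin.cons 1 s) ⬝ᵥ (X *ᵥ (Fin.cons 1 s))
            + (p.eval (enormFin s))^2 + enormFin s * (q.eval (enormFin s))^2)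
    (shat sstar : Fin n → ℝ)
    (h1 : Mfun f0 g H β σ shat = μstar)
    (h2 : Mfun f0 g H β σ sstar = μstar) :
    enormFin shat * enormFin sstar * (enormFin shat - enormFin sstar) = 0 :=
  stmt15_general f0 g H β σ hne μstar hrep shat sstar h1 h2
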